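/- Let ℓ and ℓ̃ be two positive real-valued functions on the five edges il, lj, jk, ki, ij of the triangulation formed by two triangles ijk and ilj glued along the common edge ij (where i, j, k, l are four distinct vertices). Then there exist real numbers u_i, u_j, u_k, u_l such that ℓ̃_{ab} = e^{(u_a+u_b)/2}·ℓ_{ab} holds for every one of the five edges ab if and only if (ℓ_{il}·ℓ_{jk})/(ℓ_{lj}·ℓ_{ki}) = (ℓ̃_{il}·ℓ̃_{jk})/(ℓ̃_{lj}·ℓ̃_{ki}). -/

import Mathlib

/-!
Taking logarithms turns `ℓ̃_ab = e^{(u_a+u_b)/2} ℓ_ab` into the linear system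
`(u_a + u_b)/2 = log ℓ̃_ab - log ℓ_ab` on the five edges. Triangle `ijk` determines `u_i, u_j, u_k`,
and triangle `ilj` then determines `u_l`; the system is consistent exactly when the alternating sum
of the right-hand sides around the quadrilateral `iljk` vanishes, and that alternating sum is the
logarithm of `lcr̃_ij / lcr_ij`.
-/

open Real

theorem eq_exp_mul_iff_eq_log_sub_log {x y : ℝ} (hx : 0 < x) (hy : 0 < y) (u : ℝ) :
    x = exp u * y ↔ u = log x - log y := by
  rw [← log_div hx.ne' hy.ne', ← div_eq_iff hy.ne', eq_comm]
  exact ⟨fun h => by rw [← h, log_exp], fun h => by rw [h, exp_log (div_pos hx hy)]⟩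

theorem log_mul_div_mul {p q r s : ℝ} (hp : p ≠ 0) (hq : q ≠ 0) (hr : r ≠ 0) (hs : s ≠ 0) :
    log (p * q / (r * s)) = log p + log q - log r - log s := by
  rw [log_div (mul_ne_zero hp hq) (mul_ne_zero hr hs), log_mul hp hq, log_mul hr hs]
  ring

theorem mul_div_mul_eq_iff_log_sub_log {p q r s p' q' r' s' : ℝ}
    (hp : 0 < p) (hq : 0 < q) (hr : 0 < r) (hs : 0 < s)
    (hp' : 0 < p') (hq' : 0 < q') (hr' : 0 < r') (hs' : 0 < s') :
    p * q / (r * s) = p' * q' / (r' * s') ↔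
      log p' - log p + (log q' - log q) = log r' - log r + (log s' - log s) := by
  rw [← log_injOn_pos.eq_iff (Set.mem_Ioi.2 (by positivity)) (Set.mem_Ioi.2 (by positivity)),
    log_mul_div_mul hp.ne' hq.ne' hr.ne' hs.ne', log_mul_div_mul hp'.ne' hq'.ne' hr'.ne' hs'.ne']
  constructor <;> intro h <;> linarith

theorem exists_half_sums_eq_iff (a b c d e : ℝ) :
    (∃ ui uj uk ul : ℝ, (ui + ul) / 2 = a ∧ (ul + uj) / 2 = b ∧ (uj + uk) / 2 = c ∧
      (uk + ui) / 2 = d ∧ (ui + uj) / 2 = e) ↔ a + c = b + d := by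
  constructor
  · rintro ⟨ui, uj, uk, ul, rfl, rfl, rfl, rfl, -⟩
    ring
  · intro h
    exact ⟨e + d - c, e + c - d, c + d - e, a + b - e, by linarith, by linarith, by ring, by ring,
      by ring⟩

theorem two_triangles_conformal_iff_lcr
    (lil llj ljk lki lij til tlj tjk tki tij : ℝ)
    (hil : 0 < lil) (hlj : 0 < llj) (hjk : 0 < ljk) (hki : 0 < lki) (hij : 0 < lij)
    (htil : 0 < til) (htlj : 0 < tlj) (htjk : 0 < tjk) (htki : 0 < tki)
    (htij : 0 < tij) :
    (∃ ui uj uk ul : ℝ,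
      til = Real.exp ((ui + ul) / 2) * lil ∧
      tlj = Real.exp ((ul + uj) / 2) * llj ∧
      tjk = Real.exp ((uj + uk) / 2) * ljk ∧
      tki = Real.exp ((uk + ui) / 2) * lki ∧
      tij = Real.exp ((ui + uj) / 2) * lij) ↔
    (lil * ljk) / (llj * lki) = (til * tjk) / (tlj * tki) := by
  simp only [eq_exp_mul_iff_eq_log_sub_log htil hil, eq_exp_mul_iff_eq_log_sub_log htlj hlj,
    eq_exp_mul_iff_eq_log_sub_log htjk hjk, eq_exp_mul_iff_eq_log_sub_log htki hki,
    eq_exp_mul_iff_eq_log_sub_log htij hij]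
  rw [exists_half_sums_eq_iff, mul_div_mul_eq_iff_log_sub_log hil hjk hlj hki htil htjk htlj htki]
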